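/- Let G=(V,E) be a locally finite graph, and let L and R be disjoint sets of vertices. Let r ≥ 1 be an integer and let A be a set of vertices such that B_r(A) (the set of vertices at distance at most r from A) is not a vertex cutset from L to R. Let p, δ ∈ [0,1] be such that for every vertex v, P_p(B_{r-1}(v) ↔ L ∪ R) ≥ 1-δ. Then there exists a vertex u such that the ball B := B_r(u) is disjoint from A and satisfies both P_p(B ↔^{V∖R} L) ≥ 1-√δ and P_p(B ↔^{V∖L} R) ≥ 1-√δ. -/

import Mathlib

open MeasureTheory Set

noncomputable section

namespace Perco

variable {V : Type*}

/-- The set of (potential) edges both of whose endpoints lie in `A`. -/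
def edgesWithin (A : Set V) : Set (Sym2 V) := {e | ∀ v ∈ e, v ∈ A}

/-- The spanning subgraph of `G` consisting of those edges of `G` lying in `F`. -/
def openGraph (G : SimpleGraph V) (F : Set (Sym2 V)) : SimpleGraph V where
  Adj u v := G.Adj u v ∧ s(u, v) ∈ F
  symm := ⟨fun u v h => ⟨h.1.symm, by rw [Sym2.eq_swap]; exact h.2⟩⟩
  loopless := ⟨fun v h => G.loopless.irrefl v h.1⟩

/-- The union of the clusters of the vertices of `S` in the configuration whose set of open
edges is `F`. -/
def cluster (G : SimpleGraph V) (F : Set (Sym2 V)) (S : Set V) : Set V :=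
  {v | ∃ u ∈ S, (openGraph G F).Reachable u v}

/-- `L` and `R` are connected by a path of edges of `G` lying in `F`. -/
def ConnVia (G : SimpleGraph V) (F : Set (Sym2 V)) (L R : Set V) : Prop :=
  ∃ u ∈ L, ∃ v ∈ R, (openGraph G F).Reachable u v

/-- The edge boundary `∂S`: edges of `G` with exactly one endpoint in `S`. -/
def edgeBdry (G : SimpleGraph V) (S : Set V) : Set (Sym2 V) :=
  {e | ∃ u v, G.Adj u v ∧ e = s(u, v) ∧ u ∈ S ∧ v ∉ S}

/-- The set of vertices at graph distance at most `r` from the set `A`. -/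
def ball (G : SimpleGraph V) (A : Set V) (r : ℕ) : Set V :=
  {v | ∃ u ∈ A, G.Reachable u v ∧ G.dist u v ≤ r}

/-- The set of open edges of a configuration `ω` on an edge set `F`. -/
def openOf {F : Set (Sym2 V)} (ω : F → Bool) : Set (Sym2 V) :=
  {e | ∃ h : e ∈ F, ω ⟨e, h⟩ = true}

/-- `μ` is the Bernoulli(`p`) product (percolation) measure on `{0,1}^E`: it is a probability
measure giving every finite cylinder event its product probability. -/
def IsBernoulli {E : Type*} (p : ℝ) (μ : Measure (E → Bool)) : Prop :=
  IsProbabilityMeasure μ ∧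
    ∀ (J : Finset E) (σ : E → Bool),
      μ {ω | ∀ e ∈ J, ω e = σ e} =
        ∏ e ∈ J, if σ e = true then ENNReal.ofReal p else ENNReal.ofReal (1 - p)

/-- The isoperimetric function `Φ(n)`. -/
def phi (G : SimpleGraph V) (n : ℕ) : ℕ :=
  sInf {m | ∃ S : Finset V, n ≤ S.card ∧ (edgeBdry G ↑S).ncard = m}

/-- `Φ(W)`: the minimal size of `∂S` over finite `S ⊇ W`. -/
def phiSet (G : SimpleGraph V) (W : Set V) : ℕ :=
  sInf {m | ∃ S : Finset V, W ⊆ ↑S ∧ (edgeBdry G ↑S).ncard = m}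

/-- The critical probability `p_c` of `G` (with distinguished vertex `o`). -/
def pc (G : SimpleGraph V) (o : V) : ℝ :=
  sInf {p | p ∈ Icc (0 : ℝ) 1 ∧
    ∃ μ : Measure (↥G.edgeSet → Bool), IsBernoulli p μ ∧
      0 < μ {ω | (cluster G (openOf ω) {o}).Infinite}}

/-- `G` is (vertex-)transitive. -/
def IsTransitive (G : SimpleGraph V) : Prop := ∀ u v : V, ∃ φ : G ≃g G, φ u = v

/-- `G` is locally finite. -/
def LocFin (G : SimpleGraph V) : Prop := ∀ v : V, (G.neighborSet v).Finite

/-- `W` is a vertex cutset from `L` to `R`: after deleting `W`, no path from `L` to `R`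
remains. -/
def VertexCutset (G : SimpleGraph V) (W L R : Set V) : Prop :=
  ¬ ConnVia G (edgesWithin Wᶜ) (L \ W) (R \ W)

/-- The hypercubic lattice `ℤ^d`. -/
def latticeGraph (d : ℕ) : SimpleGraph (Fin d → ℤ) where
  Adj x y := ∑ i, |x i - y i| = 1
  symm := ⟨fun x y h => by simpa [abs_sub_comm] using h⟩
  loopless := ⟨fun x h => by simp at h⟩

/-- The diameter of a set of vertices, measured in the graph metric of `G`. -/
def setDiam (G : SimpleGraph V) (A : Set V) : ℕ :=
  sSup {k | ∃ u ∈ A, ∃ v ∈ A, G.dist u v = k}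

/-- The annulus `A_{k,r}` of vertices of `A` whose distance to `o` lies in `[k-r, k+r]`. -/
def annulus (G : SimpleGraph V) (A : Set V) (o : V) (k r : ℕ) : Set V :=
  {v | v ∈ A ∧ (k : ℤ) - (r : ℤ) ≤ (G.dist o v : ℤ) ∧ (G.dist o v : ℤ) ≤ (k : ℤ) + (r : ℤ)}

end Perco

/-!
Along a path from `L` to `R` avoiding `B_r(A)`, call a vertex `v` good for `L` (resp. `R`) if
`B_{r-1}(v)` is joined to `L` off `R` (resp. to `R` off `L`) with probability at least `1 - √δ`.
These two connection events cover `{B_{r-1}(v) ↔ L ∪ R}` and both are increasing, so by Harris'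
inequality the probability that both fail is at least the product of the two failure
probabilities; as it is at most `δ`, one of the failure probabilities is at most `√δ`, i.e.
every vertex is good for `L` or for `R`. The path starts in `L` and ends in `R`, so some `L`-good
vertex `x` on it is equal or adjacent to an `R`-good vertex `u`, and `B_r(u) ⊇ B_{r-1}(x)`.

Harris' inequality is proved from the four functions theorem for events depending increasingly on
finitely many edges, and passes to increasing unions of such events; in a locally finite graph
a connection event is such a union, its `n`-th member using only edges within distance `n`.
-/

theorem SimpleGraph.Walk.exists_eq_or_adj_of_forall_or {V : Type*} {G : SimpleGraph V}
    {P Q : V → Prop} {a b : V} (w : G.Walk a b) (ha : P a) (hb : Q b) (h : ∀ v, P v ∨ Q v) :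
    ∃ x y, y ∈ w.support ∧ (x = y ∨ G.Adj x y) ∧ P x ∧ Q y := by
  by_cases hQa : Q a
  · exact ⟨a, a, w.start_mem_support, .inl rfl, ha, hQa⟩
  obtain ⟨d, hd, hx, hy⟩ := w.exists_boundary_dart {v | ¬ Q v} hQa (not_not.2 hb)
  exact ⟨d.fst, d.snd, w.dart_snd_mem_support_of_mem_darts hd, .inr d.adj,
    (h _).resolve_right hx, not_not.1 hy⟩

namespace Perco

section Bernoulli

variable {ι : Type*} {p : ℝ} {μ ν : Measure (ι → Bool)}

def IncreasingOn (J : Finset ι) (E : Set (ι → Bool)) : Prop :=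
  ∀ ⦃ω ω' : ι → Bool⦄, (∀ e ∈ J, ω e ≤ ω' e) → ω ∈ E → ω' ∈ E

theorem IncreasingOn.mono {J J' : Finset ι} {E : Set (ι → Bool)} (hJ : J ⊆ J')
    (hE : IncreasingOn J E) : IncreasingOn J' E :=
  fun _ _ h => hE fun e he => h e (hJ he)

def openIn (J : Finset ι) (ω : ι → Bool) : Finset ι := {e ∈ J | ω e = true}

theorem setOf_openIn_mem (J : Finset ι) (𝒮 : Finset (Finset ι)) :
    {ω | openIn J ω ∈ 𝒮} = ⋃ s ∈ 𝒮, {ω | openIn J ω = s} := by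
  ext
  simp

section Weight

open scoped FinsetFamily

variable [DecidableEq ι]

def weight (p : ℝ) (J s : Finset ι) : ℝ := ∏ e ∈ J, if e ∈ s then p else 1 - p

theorem weight_nonneg (hp : p ∈ Icc (0 : ℝ) 1) (J s : Finset ι) : 0 ≤ weight p J s :=
  Finset.prod_nonneg fun e _ => by split_ifs <;> linarith [hp.1, hp.2]

theorem weight_mul_weight (J s t : Finset ι) :
    weight p J s * weight p J t = weight p J (s ∩ t) * weight p J (s ∪ t) := by
  simp only [weight, ← Finset.prod_mul_distrib]
  refine Finset.prod_congr rfl fun e _ => ?_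
  by_cases hs : e ∈ s <;> by_cases ht : e ∈ t <;> simp [hs, ht, mul_comm]

theorem sum_weight_powerset (J : Finset ι) : ∑ s ∈ J.powerset, weight p J s = 1 := by
  calc ∑ s ∈ J.powerset, weight p J s = ∏ _e ∈ J, (p + (1 - p)) := by
        rw [Finset.prod_add]
        refine Finset.sum_congr rfl fun s hs => ?_
        have h := Finset.prod_piecewise J s (fun _ => p) (fun _ => 1 - p)
        rwa [Finset.inter_eq_right.2 (Finset.mem_powerset.1 hs)] at h
    _ = 1 := by simp

theorem sum_weight_mul_sum_weight_le (hp : p ∈ Icc (0 : ℝ) 1) {J : Finset ι}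
    {𝒜 ℬ : Finset (Finset ι)} (h𝒜 : 𝒜 ⊆ J.powerset) (hℬ : ℬ ⊆ J.powerset)
    (h𝒜' : IsLowerSet (𝒜 : Set (Finset ι))) (hℬ' : IsLowerSet (ℬ : Set (Finset ι))) :
    (∑ s ∈ 𝒜, weight p J s) * ∑ s ∈ ℬ, weight p J s ≤ ∑ s ∈ 𝒜 ∩ ℬ, weight p J s := by
  have hw := weight_nonneg (ι := ι) hp J
  calc (∑ s ∈ 𝒜, weight p J s) * ∑ s ∈ ℬ, weight p J s
      ≤ (∑ s ∈ 𝒜 ⊼ ℬ, weight p J s) * ∑ s ∈ 𝒜 ⊻ ℬ, weight p J s :=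
        four_functions_theorem _ _ _ _ hw hw hw hw
          (fun s t => (weight_mul_weight J s t).le) 𝒜 ℬ
    _ ≤ (∑ s ∈ 𝒜 ∩ ℬ, weight p J s) * ∑ s ∈ J.powerset, weight p J s := by
        refine mul_le_mul (Finset.sum_le_sum_of_subset_of_nonneg ?_ fun _ _ _ => hw _)
          (Finset.sum_le_sum_of_subset_of_nonneg ?_ fun _ _ _ => hw _)
          (Finset.sum_nonneg fun _ _ => hw _) (Finset.sum_nonneg fun _ _ => hw _)
        · rintro _ hc
          obtain ⟨a, ha, b, hb, rfl⟩ := Finset.mem_infs.1 hc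
          exact Finset.mem_inter.2 ⟨h𝒜' inf_le_left ha, hℬ' inf_le_right hb⟩
        · rintro _ hc
          obtain ⟨a, ha, b, hb, rfl⟩ := Finset.mem_sups.1 hc
          exact Finset.mem_powerset.2 (Finset.union_subset (Finset.mem_powerset.1 (h𝒜 ha))
            (Finset.mem_powerset.1 (hℬ hb)))
    _ = ∑ s ∈ 𝒜 ∩ ℬ, weight p J s := by rw [sum_weight_powerset, mul_one]

theorem openIn_eq_iff {J s : Finset ι} (hs : s ⊆ J) {ω : ι → Bool} :
    openIn J ω = s ↔ ∀ e ∈ J, ω e = decide (e ∈ s) := by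
  constructor
  · rintro rfl e he
    simp [openIn, he]
  · intro h
    ext e
    by_cases he : e ∈ J
    · simp [openIn, he, h e he]
    · simpa [openIn, he] using fun h' => he (hs h')

theorem measurableSet_openIn_eq {J s : Finset ι} (hs : s ⊆ J) :
    MeasurableSet {ω : ι → Bool | openIn J ω = s} := by
  simp only [openIn_eq_iff hs, Set.ofPred_forall]
  exact .biInter J.countable_toSet fun e _ =>
    measurableSet_eq_fun (measurable_pi_apply e) measurable_const

theorem measure_openIn_eq (hμ : IsBernoulli p μ) (hp : p ∈ Icc (0 : ℝ) 1) {J s : Finset ι}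
    (hs : s ⊆ J) :
    μ {ω | openIn J ω = s} = ENNReal.ofReal (weight p J s) := by
  simp only [openIn_eq_iff hs]
  rw [hμ.2, weight,
    ENNReal.ofReal_prod_of_nonneg fun e _ => by split_ifs <;> linarith [hp.1, hp.2]]
  refine Finset.prod_congr rfl fun e _ => ?_
  by_cases he : e ∈ s <;> simp [he]

theorem compl_setOf_openIn_mem (J : Finset ι) (𝒮 : Finset (Finset ι)) :
    {ω | openIn J ω ∈ 𝒮}ᶜ = {ω | openIn J ω ∈ J.powerset \ 𝒮} := by
  ext
  simp [openIn]

theorem measurableSet_openIn_mem {J : Finset ι} {𝒮 : Finset (Finset ι)}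
    (h𝒮 : 𝒮 ⊆ J.powerset) : MeasurableSet {ω | openIn J ω ∈ 𝒮} := by
  rw [setOf_openIn_mem]
  exact .biUnion 𝒮.countable_toSet fun s hs =>
    measurableSet_openIn_eq (Finset.mem_powerset.1 (h𝒮 hs))

theorem measure_openIn_mem (hμ : IsBernoulli p μ)
    (hp : p ∈ Icc (0 : ℝ) 1) {J : Finset ι} {𝒮 : Finset (Finset ι)} (h𝒮 : 𝒮 ⊆ J.powerset) :
    μ {ω | openIn J ω ∈ 𝒮} = ENNReal.ofReal (∑ s ∈ 𝒮, weight p J s) := by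
  rw [setOf_openIn_mem, measure_biUnion_finset,
    ENNReal.ofReal_sum_of_nonneg fun s _ => weight_nonneg hp J s]
  · exact Finset.sum_congr rfl fun s hs =>
      measure_openIn_eq hμ hp (Finset.mem_powerset.1 (h𝒮 hs))
  · exact fun s _ t _ hst => Set.disjoint_left.2 fun ω h₁ h₂ => hst (h₁.symm.trans h₂)
  · exact fun s hs => measurableSet_openIn_eq (Finset.mem_powerset.1 (h𝒮 hs))

theorem IncreasingOn.exists_eq_openIn_mem {J : Finset ι} {E : Set (ι → Bool)}
    (hE : IncreasingOn J E) : ∃ 𝒮 ⊆ J.powerset,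
      IsLowerSet ((J.powerset \ 𝒮 : Finset (Finset ι)) : Set (Finset ι)) ∧
        E = {ω | openIn J ω ∈ 𝒮} := by
  classical
  let cfg : Finset ι → ι → Bool := fun s e => decide (e ∈ s)
  have hcfg : ∀ s t : Finset ι, t ⊆ s → cfg t ∈ E → cfg s ∈ E := fun s t hts =>
    hE fun e _ => by
      by_cases he : e ∈ t
      · simp [cfg, he, hts he]
      · simp [cfg, he]
  refine ⟨J.powerset.filter (cfg · ∈ E), Finset.filter_subset _ _, ?_, ?_⟩
  · intro s t hts hs
    simp only [Finset.coe_sdiff, Finset.coe_filter, Finset.mem_powerset, mem_sdiff,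
      Finset.mem_coe, mem_ofPred_eq, not_and] at hs ⊢
    exact ⟨hts.trans hs.1, fun _ ht => hs.2 hs.1 (hcfg s t hts ht)⟩
  · ext ω
    have hagree : ∀ e ∈ J, cfg (openIn J ω) e = ω e := fun e he => by simp [cfg, openIn, he]
    simp only [Finset.mem_filter, Finset.mem_powerset, openIn, Finset.filter_subset, true_and]
    exact ⟨hE fun e he => (hagree e he).ge, hE fun e he => (hagree e he).le⟩

end Weight

variable {J : Finset ι} {E F : Set (ι → Bool)}

theorem IncreasingOn.measurableSet (hE : IncreasingOn J E) : MeasurableSet E := by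
  classical
  obtain ⟨𝒮, h𝒮, -, rfl⟩ := hE.exists_eq_openIn_mem
  exact measurableSet_openIn_mem h𝒮

theorem IncreasingOn.measure_eq (hp : p ∈ Icc (0 : ℝ) 1) (hμ : IsBernoulli p μ)
    (hν : IsBernoulli p ν) (hE : IncreasingOn J E) : μ E = ν E := by
  classical
  obtain ⟨𝒮, h𝒮, -, rfl⟩ := hE.exists_eq_openIn_mem
  rw [measure_openIn_mem hμ hp h𝒮, measure_openIn_mem hν hp h𝒮]

theorem IncreasingOn.harris (hp : p ∈ Icc (0 : ℝ) 1) (hμ : IsBernoulli p μ)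
    (hE : IncreasingOn J E) (hF : IncreasingOn J F) : μ Eᶜ * μ Fᶜ ≤ μ (Eᶜ ∩ Fᶜ) := by
  classical
  obtain ⟨𝒮, -, h𝒮, rfl⟩ := hE.exists_eq_openIn_mem
  obtain ⟨𝒯, -, h𝒯, rfl⟩ := hF.exists_eq_openIn_mem
  have hinter : {ω | openIn J ω ∈ J.powerset \ 𝒮} ∩ {ω | openIn J ω ∈ J.powerset \ 𝒯} =
      {ω | openIn J ω ∈ (J.powerset \ 𝒮) ∩ (J.powerset \ 𝒯)} := by
    ext ω; simp
  rw [compl_setOf_openIn_mem, compl_setOf_openIn_mem, hinter,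
    measure_openIn_mem hμ hp Finset.sdiff_subset,
    measure_openIn_mem hμ hp Finset.sdiff_subset,
    measure_openIn_mem hμ hp (Finset.inter_subset_left.trans Finset.sdiff_subset),
    ← ENNReal.ofReal_mul (Finset.sum_nonneg fun s _ => weight_nonneg hp J s)]
  exact ENNReal.ofReal_le_ofReal (sum_weight_mul_sum_weight_le hp Finset.sdiff_subset
    Finset.sdiff_subset h𝒮 h𝒯)

def IsIncreasingLimit (E : Set (ι → Bool)) : Prop :=
  ∃ Eₙ : ℕ → Set (ι → Bool), Monotone Eₙ ∧ (∀ n, ∃ J, IncreasingOn J (Eₙ n)) ∧ E = ⋃ n, Eₙ n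

theorem IsIncreasingLimit.measurableSet (hE : IsIncreasingLimit E) : MeasurableSet E := by
  obtain ⟨E, -, hEJ, rfl⟩ := hE
  exact .iUnion fun n => (hEJ n).choose_spec.measurableSet

theorem IsIncreasingLimit.measure_eq (hp : p ∈ Icc (0 : ℝ) 1) (hμ : IsBernoulli p μ)
    (hν : IsBernoulli p ν) (hE : IsIncreasingLimit E) : μ E = ν E := by
  obtain ⟨E, hEm, hEJ, rfl⟩ := hE
  rw [hEm.measure_iUnion, hEm.measure_iUnion]
  exact iSup_congr fun n => (hEJ n).choose_spec.measure_eq hp hμ hν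

theorem IsIncreasingLimit.harris (hp : p ∈ Icc (0 : ℝ) 1) (hμ : IsBernoulli p μ)
    (hE : IsIncreasingLimit E) (hF : IsIncreasingLimit F) : μ Eᶜ * μ Fᶜ ≤ μ (Eᶜ ∩ Fᶜ) := by
  obtain ⟨E, hEm, hEJ, rfl⟩ := hE
  obtain ⟨F, hFm, hFJ, rfl⟩ := hF
  have := hμ.1
  have hanti : Antitone fun n => (E n)ᶜ ∩ (F n)ᶜ := fun m n hmn =>
    inter_subset_inter (compl_subset_compl.2 (hEm hmn)) (compl_subset_compl.2 (hFm hmn))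
  rw [compl_iUnion, compl_iUnion, ← iInter_inter_distrib, hanti.measure_iInter
    (fun n => ((hEJ n).choose_spec.measurableSet.compl.inter
      (hFJ n).choose_spec.measurableSet.compl).nullMeasurableSet) ⟨0, measure_ne_top _ _⟩]
  refine le_iInf fun n => ?_
  obtain ⟨J, hJ⟩ := hEJ n
  obtain ⟨K, hK⟩ := hFJ n
  classical
  calc μ (⋂ n, (E n)ᶜ) * μ (⋂ n, (F n)ᶜ) ≤ μ (E n)ᶜ * μ (F n)ᶜ :=
        mul_le_mul' (measure_mono (iInter_subset _ n)) (measure_mono (iInter_subset _ n))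
    _ ≤ μ ((E n)ᶜ ∩ (F n)ᶜ) :=
        (hJ.mono Finset.subset_union_left).harris hp hμ (hK.mono Finset.subset_union_right)

def ProbAtLeast (p : ℝ) (E : Set (ι → Bool)) (c : ℝ) : Prop :=
  ∀ μ : Measure (ι → Bool), IsBernoulli p μ → ENNReal.ofReal c ≤ μ E

theorem ProbAtLeast.mono {c : ℝ} (hEF : E ⊆ F) (hE : ProbAtLeast p E c) : ProbAtLeast p F c :=
  fun μ hμ => (hE μ hμ).trans (measure_mono hEF)

theorem probAtLeast_univ {c : ℝ} (hc : c ≤ 1) : ProbAtLeast p (univ : Set (ι → Bool)) c :=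
  fun μ hμ => by
    have := hμ.1
    rw [measure_univ]
    exact ENNReal.ofReal_le_one.2 hc

theorem IsIncreasingLimit.probAtLeast_of_measure_compl_le {c : ℝ} (hp : p ∈ Icc (0 : ℝ) 1)
    (hμ : IsBernoulli p μ) (hE : IsIncreasingLimit E) (hc : 0 ≤ c)
    (hEc : μ Eᶜ ≤ ENNReal.ofReal c) : ProbAtLeast p E (1 - c) := by
  intro ν hν
  have := hμ.1
  rw [hE.measure_eq hp hν hμ, ENNReal.ofReal_sub _ hc, ENNReal.ofReal_one, tsub_le_iff_right,
    ← prob_add_prob_compl (μ := μ) hE.measurableSet]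
  gcongr

theorem IsIncreasingLimit.probAtLeast_sqrt_or {δ : ℝ} (hp : p ∈ Icc (0 : ℝ) 1)
    (hE : IsIncreasingLimit E) (hF : IsIncreasingLimit F) (hEF : ProbAtLeast p (E ∪ F) (1 - δ)) :
    ProbAtLeast p E (1 - √δ) ∨ ProbAtLeast p F (1 - √δ) := by
  by_cases hex : ∃ μ : Measure (ι → Bool), IsBernoulli p μ
  swap
  · exact .inl fun μ hμ => absurd ⟨μ, hμ⟩ hex
  obtain ⟨μ, hμ⟩ := hex
  have := hμ.1
  have hfail : μ Eᶜ * μ Fᶜ ≤ ENNReal.ofReal √δ * ENNReal.ofReal √δ := calc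
    μ Eᶜ * μ Fᶜ ≤ μ (E ∪ F)ᶜ := compl_union E F ▸ hE.harris hp hμ hF
    _ = 1 - μ (E ∪ F) := prob_compl_eq_one_sub (hE.measurableSet.union hF.measurableSet)
    _ ≤ 1 - ENNReal.ofReal (1 - δ) := tsub_le_tsub_left (hEF μ hμ) 1
    _ ≤ ENNReal.ofReal δ := by
        rw [tsub_le_iff_right]
        simpa using ENNReal.ofReal_add_le (p := δ) (q := 1 - δ)
    _ ≤ ENNReal.ofReal √δ * ENNReal.ofReal √δ := by
        rw [← ENNReal.ofReal_mul (Real.sqrt_nonneg δ)]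
        rcases le_total 0 δ with hδ | hδ
        · rw [Real.mul_self_sqrt hδ]
        · simp [ENNReal.ofReal_of_nonpos hδ]
  by_cases hEc : μ Eᶜ ≤ ENNReal.ofReal √δ
  · exact .inl (hE.probAtLeast_of_measure_compl_le hp hμ (Real.sqrt_nonneg δ) hEc)
  refine .inr (hF.probAtLeast_of_measure_compl_le hp hμ (Real.sqrt_nonneg δ) ?_)
  by_contra hFc
  exact (ENNReal.mul_lt_mul (not_le.1 hEc) (not_le.1 hFc)).not_ge hfail

end Bernoulli

section Graph

variable {V : Type*} {G : SimpleGraph V} {A B S S' T T' : Set V} {F F' : Set (Sym2 V)}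

theorem mem_ball_singleton {u x : V} {s : ℕ} :
    x ∈ ball G {u} s ↔ G.Reachable u x ∧ G.dist u x ≤ s := by
  simp [ball]

theorem mem_ball_self (v : V) (s : ℕ) : v ∈ ball G {v} s :=
  mem_ball_singleton.2 ⟨.refl v, by simp⟩

theorem ball_mono {s t : ℕ} (hst : s ≤ t) : ball G A s ⊆ ball G A t :=
  fun _ ⟨u, hu, hux, hd⟩ => ⟨u, hu, hux, hd.trans hst⟩

theorem ball_singleton_subset_of_adj {x y : V} (hxy : G.Adj x y) (s : ℕ) :
    ball G {x} s ⊆ ball G {y} (s + 1) := by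
  intro z hz
  rw [mem_ball_singleton] at hz ⊢
  refine ⟨hxy.symm.reachable.trans hz.1, ?_⟩
  have hyx : G.dist y x ≤ 1 := by simpa using SimpleGraph.dist_le hxy.symm.toWalk
  linarith [hxy.symm.reachable.dist_triangle_left z]

theorem ball_pred_subset_of_eq_or_adj {x y : V} {r : ℕ} (hr : 1 ≤ r)
    (hxy : x = y ∨ G.Adj x y) : ball G {x} (r - 1) ⊆ ball G {y} r := by
  rcases hxy with rfl | hxy
  · exact ball_mono (Nat.sub_le r 1)
  · simpa [Nat.sub_add_cancel hr] using ball_singleton_subset_of_adj hxy (r - 1)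

theorem disjoint_ball_singleton {u : V} {r : ℕ} (hu : u ∉ ball G A r) :
    Disjoint (ball G {u} r) A := by
  refine Set.disjoint_left.2 fun x hx hxA => hu ⟨x, hxA, ?_⟩
  rw [mem_ball_singleton] at hx
  exact ⟨hx.1.symm, SimpleGraph.dist_comm.le.trans hx.2⟩

theorem ball_succ_subset (n : ℕ) :
    ball G A (n + 1) ⊆ A ∪ ball G (⋃ a ∈ A, G.neighborSet a) n := by
  rintro x ⟨u, hu, hux, hd⟩
  obtain ⟨w, hw⟩ := hux.exists_walk_length_eq_dist
  cases w with
  | nil => exact .inl hu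
  | @cons _ y _ huy w =>
    refine .inr ⟨y, mem_iUnion₂.2 ⟨u, hu, huy⟩, w.reachable, ?_⟩
    have := SimpleGraph.dist_le w
    simp only [SimpleGraph.Walk.length_cons] at hw
    omega

theorem LocFin.finite_ball (hlf : LocFin G) (hA : A.Finite) (n : ℕ) : (ball G A n).Finite := by
  induction n generalizing A with
  | zero =>
    refine hA.subset fun x ⟨u, hu, hux, hd⟩ => ?_
    rwa [← hux.dist_eq_zero_iff.1 (Nat.le_zero.1 hd)]
  | succ n ih =>
    exact (hA.union (ih (hA.biUnion fun a _ => hlf a))).subset (ball_succ_subset n)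

theorem mem_edgeSet_openGraph {e : Sym2 V} :
    e ∈ (openGraph G F).edgeSet ↔ e ∈ G.edgeSet ∧ e ∈ F := by
  induction e using Sym2.ind with
  | _ x y => exact Iff.rfl

theorem openGraph_le : openGraph G F ≤ G := fun _ _ h => h.1

theorem openGraph_mono (hF : F ⊆ F') : openGraph G F ≤ openGraph G F' :=
  fun _ _ h => ⟨h.1, hF h.2⟩

theorem ConnVia.mono (hF : F ⊆ F') (hS : S ⊆ S') (hT : T ⊆ T') :
    ConnVia G F S T → ConnVia G F' S' T' :=
  fun ⟨u, hu, v, hv, huv⟩ => ⟨u, hS hu, v, hT hv, huv.mono (openGraph_mono hF)⟩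

theorem connVia_of_mem {x : V} (hS : x ∈ S) (hT : x ∈ T) : ConnVia G F S T :=
  ⟨x, hS, x, hT, .refl x⟩

theorem support_subset_of_openGraph_edgesWithin {X : Set V} {a b : V}
    (w : (openGraph G (edgesWithin X)).Walk a b) (ha : a ∈ X) : ∀ x ∈ w.support, x ∈ X := by
  induction w with
  | nil => simpa using ha
  | cons h w ih =>
    simp only [SimpleGraph.Walk.support_cons, List.mem_cons, forall_eq_or_imp]
    exact ⟨ha, ih (h.2 _ (Sym2.mem_mk_right _ _))⟩

-- `a ∉ R` (resp. `a ∉ L`) is carried along so that the edge prepended in the induction step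
-- stays off `R` (resp. `L`).
theorem reachable_split_of_walk {L R : Set V} (hLR : Disjoint L R) {a b : V}
    (w : (openGraph G F).Walk a b) (hb : b ∈ L ∪ R) :
    (a ∉ R ∧ ∃ y ∈ L, (openGraph G (F ∩ edgesWithin Rᶜ)).Reachable a y) ∨
      (a ∉ L ∧ ∃ y ∈ R, (openGraph G (F ∩ edgesWithin Lᶜ)).Reachable a y) := by
  induction w with
  | nil =>
    rcases hb with hb | hb
    · exact .inl ⟨Set.disjoint_left.1 hLR hb, _, hb, .refl _⟩
    · exact .inr ⟨Set.disjoint_right.1 hLR hb, _, hb, .refl _⟩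
  | @cons a c _ h w ih =>
    by_cases haL : a ∈ L
    · exact .inl ⟨Set.disjoint_left.1 hLR haL, a, haL, .refl a⟩
    by_cases haR : a ∈ R
    · exact .inr ⟨Set.disjoint_right.1 hLR haR, a, haR, .refl a⟩
    have hadj : ∀ X : Set V, a ∈ X → c ∈ X → (openGraph G (F ∩ edgesWithin X)).Adj a c :=
      fun X ha hc => ⟨h.1, h.2, fun v hv => by
        rcases Sym2.mem_iff.1 hv with rfl | rfl <;> assumption⟩
    rcases ih hb with ⟨hc, y, hy, hcy⟩ | ⟨hc, y, hy, hcy⟩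
    · exact .inl ⟨haR, y, hy, (hadj _ haR hc).reachable.trans hcy⟩
    · exact .inr ⟨haL, y, hy, (hadj _ haL hc).reachable.trans hcy⟩

theorem ConnVia.split {L R : Set V} (hLR : Disjoint L R) (h : ConnVia G F S (L ∪ R)) :
    ConnVia G (F ∩ edgesWithin Rᶜ) S L ∨ ConnVia G (F ∩ edgesWithin Lᶜ) S R := by
  obtain ⟨u, hu, b, hb, ⟨w⟩⟩ := h
  rcases reachable_split_of_walk hLR w hb with ⟨-, y, hy, huy⟩ | ⟨-, y, hy, huy⟩
  · exact .inl ⟨u, hu, y, hy, huy⟩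
  · exact .inr ⟨u, hu, y, hy, huy⟩

theorem ConnVia.exists_edgesWithin_ball (h : ConnVia G F S T) :
    ∃ n, ConnVia G (F ∩ edgesWithin (ball G S n)) S T := by
  classical
  obtain ⟨u, hu, v, hv, ⟨w⟩⟩ := h
  have hball : ∀ x ∈ w.support, x ∈ ball G S w.length := fun x hx => by
    let w' := (w.takeUntil x hx).mapLe openGraph_le
    refine ⟨u, hu, w'.reachable, (SimpleGraph.dist_le w').trans ?_⟩
    simpa [w'] using w.length_takeUntil_le_length hx
  refine ⟨w.length, u, hu, v, hv, ⟨w.transfer _ fun e he => ?_⟩⟩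
  have he' := mem_edgeSet_openGraph.1 (w.edges_subset_edgeSet he)
  exact mem_edgeSet_openGraph.2
    ⟨he'.1, he'.2, fun x hx => hball x (SimpleGraph.Walk.mem_support_of_mem_edges he hx)⟩

end Graph

section ConnectionEvent

variable {V : Type*} {G : SimpleGraph V} {Y S S' T : Set V} {p : ℝ}

theorem edgesWithin_mono {A B : Set V} (hAB : A ⊆ B) : edgesWithin A ⊆ edgesWithin B :=
  fun _ he v hv => hAB (he v hv)

theorem edgesWithin_inter (A B : Set V) :
    edgesWithin (A ∩ B) = edgesWithin A ∩ edgesWithin B := by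
  ext e
  exact ⟨fun he => ⟨fun v hv => (he v hv).1, fun v hv => (he v hv).2⟩,
    fun he v hv => ⟨he.1 v hv, he.2 v hv⟩⟩

theorem finite_edgesWithin {B : Set V} (hB : B.Finite) :
    {e : G.edgeSet | (e : Sym2 V) ∈ edgesWithin B}.Finite := by
  have h : edgesWithin B = B.sym2 := by
    ext e
    exact Set.mem_sym2_iff_subset.symm
  have hfin : (edgesWithin B).Finite := by
    rw [h, Set.sym2_eq_mk_image]
    exact (hB.prod hB).image _
  exact hfin.preimage Subtype.val_injective.injOn

-- The event `S ↔^Y T`.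
def connEvent (G : SimpleGraph V) (Y S T : Set V) : Set (G.edgeSet → Bool) :=
  {ω | ConnVia G (openOf ω ∩ edgesWithin Y) S T}

theorem connEvent_mono_left (hS : S ⊆ S') : connEvent G Y S T ⊆ connEvent G Y S' T :=
  fun _ hω => hω.mono subset_rfl hS subset_rfl

theorem increasingOn_connEvent {B : Set V} (hB : B.Finite) :
    IncreasingOn (finite_edgesWithin (G := G) hB).toFinset (connEvent G (Y ∩ B) S T) := by
  intro ω ω' hωω' hω
  refine hω.mono ?_ subset_rfl subset_rfl
  rintro e ⟨⟨he, hωe⟩, hYB⟩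
  refine ⟨⟨he, ?_⟩, hYB⟩
  have hle := hωω' ⟨e, he⟩ ((Set.Finite.mem_toFinset _).2 fun v hv => (hYB v hv).2)
  rw [hωe] at hle
  exact top_le_iff.1 hle

theorem LocFin.isIncreasingLimit_connEvent (hlf : LocFin G) (hS : S.Finite) :
    IsIncreasingLimit (connEvent G Y S T) := by
  refine ⟨fun n => connEvent G (Y ∩ ball G S n) S T, fun m n hmn ω hω => ?_,
    fun n => ⟨_, increasingOn_connEvent (hlf.finite_ball hS n)⟩, ?_⟩
  · exact hω.mono (inter_subset_inter_right _ (edgesWithin_mono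
      (inter_subset_inter_right _ (ball_mono hmn)))) subset_rfl subset_rfl
  · ext ω
    simp only [mem_iUnion]
    constructor
    · intro hω
      obtain ⟨n, hn⟩ := ConnVia.exists_edgesWithin_ball hω
      refine ⟨n, hn.mono ?_ subset_rfl subset_rfl⟩
      rw [edgesWithin_inter, inter_assoc]
    · rintro ⟨n, hn⟩
      exact hn.mono (inter_subset_inter_right _ (edgesWithin_mono inter_subset_left))
        subset_rfl subset_rfl

theorem probAtLeast_connEvent_of_mem {c : ℝ} {x : V} (hc : c ≤ 1) (hS : x ∈ S)
    (hT : x ∈ T) : ProbAtLeast p (connEvent G Y S T) c :=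
  (probAtLeast_univ hc).mono fun _ _ => connVia_of_mem hS hT

theorem LocFin.probAtLeast_connEvent_or (hlf : LocFin G) (hp : p ∈ Icc (0 : ℝ) 1)
    {L R : Set V} (hLR : Disjoint L R) (hS : S.Finite) {δ : ℝ}
    (h : ProbAtLeast p {ω : G.edgeSet → Bool | ConnVia G (openOf ω) S (L ∪ R)} (1 - δ)) :
    ProbAtLeast p (connEvent G Rᶜ S L) (1 - √δ) ∨
      ProbAtLeast p (connEvent G Lᶜ S R) (1 - √δ) :=
  (hlf.isIncreasingLimit_connEvent hS).probAtLeast_sqrt_or hp (hlf.isIncreasingLimit_connEvent hS)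
    (h.mono fun _ hω => hω.split hLR)

end ConnectionEvent

end Perco

open Perco in
theorem statement_5_general {V : Type*} (G : SimpleGraph V) (hlf : LocFin G)
    (L R : Set V) (hLR : Disjoint L R) (r : ℕ) (hr : 1 ≤ r) (A : Set V)
    (hA : ¬ VertexCutset G (ball G A r) L R)
    (p δ : ℝ) (hp : p ∈ Set.Icc (0 : ℝ) 1)
    (hmid : ∀ v : V, ∀ μ : MeasureTheory.Measure (↥G.edgeSet → Bool), IsBernoulli p μ →
      ENNReal.ofReal (1 - δ) ≤ μ {ω | ConnVia G (openOf ω) (ball G {v} (r - 1)) (L ∪ R)}) :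
    ∃ u : V, Disjoint (ball G {u} r) A ∧
      (∀ μ : MeasureTheory.Measure (↥G.edgeSet → Bool), IsBernoulli p μ →
        ENNReal.ofReal (1 - Real.sqrt δ) ≤
          μ {ω | ConnVia G (openOf ω ∩ edgesWithin Rᶜ) (ball G {u} r) L}) ∧
      (∀ μ : MeasureTheory.Measure (↥G.edgeSet → Bool), IsBernoulli p μ →
        ENNReal.ofReal (1 - Real.sqrt δ) ≤
          μ {ω | ConnVia G (openOf ω ∩ edgesWithin Lᶜ) (ball G {u} r) R}) := by
  obtain ⟨a, ⟨haL, haW⟩, b, ⟨hbR, -⟩, ⟨w⟩⟩ := not_not.1 hA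
  have hsure : ∀ {v : V} {Y T : Set V}, v ∈ T →
      ProbAtLeast p (connEvent G Y (ball G {v} (r - 1)) T) (1 - √δ) := fun hv =>
    probAtLeast_connEvent_of_mem (by linarith [Real.sqrt_nonneg δ]) (mem_ball_self _ _) hv
  have hgood : ∀ v, ProbAtLeast p (connEvent G Rᶜ (ball G {v} (r - 1)) L) (1 - √δ) ∨
      ProbAtLeast p (connEvent G Lᶜ (ball G {v} (r - 1)) R) (1 - √δ) := fun v =>
    hlf.probAtLeast_connEvent_or hp hLR (hlf.finite_ball (finite_singleton v) _) (hmid v)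
  obtain ⟨x, u, hu, hxu, hx, hu'⟩ := w.exists_eq_or_adj_of_forall_or (hsure haL) (hsure hbR) hgood
  have hxu' : ball G {x} (r - 1) ⊆ ball G {u} r :=
    ball_pred_subset_of_eq_or_adj hr (hxu.imp_right (openGraph_le ·))
  exact ⟨u, disjoint_ball_singleton (support_subset_of_openGraph_edgesWithin w haW u hu),
    hx.mono (connEvent_mono_left hxu'),
    hu'.mono (connEvent_mono_left (ball_mono (Nat.sub_le r 1)))⟩

open Perco in
/-- Finding one mid-ball: if `B_r(A)` is not a vertex cutset from `L` to `R`
and every ball of radius `r-1` connects to `L ∪ R` with probability at least `1-δ`, then there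
is a ball of radius `r` disjoint from `A` which connects to `L` avoiding `R`, and to `R`
avoiding `L`, each with probability at least `1-√δ`. -/
theorem statement_5 {V : Type*} (G : SimpleGraph V) (hlf : LocFin G)
    (L R : Set V) (hLR : Disjoint L R) (r : ℕ) (hr : 1 ≤ r) (A : Set V)
    (hA : ¬ VertexCutset G (ball G A r) L R)
    (p δ : ℝ) (hp : p ∈ Set.Icc (0 : ℝ) 1) (hδ : δ ∈ Set.Icc (0 : ℝ) 1)
    (hmid : ∀ v : V, ∀ μ : MeasureTheory.Measure (↥G.edgeSet → Bool), IsBernoulli p μ →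
      ENNReal.ofReal (1 - δ) ≤ μ {ω | ConnVia G (openOf ω) (ball G {v} (r - 1)) (L ∪ R)}) :
    ∃ u : V, Disjoint (ball G {u} r) A ∧
      (∀ μ : MeasureTheory.Measure (↥G.edgeSet → Bool), IsBernoulli p μ →
        ENNReal.ofReal (1 - Real.sqrt δ) ≤
          μ {ω | ConnVia G (openOf ω ∩ edgesWithin Rᶜ) (ball G {u} r) L}) ∧
      (∀ μ : MeasureTheory.Measure (↥G.edgeSet → Bool), IsBernoulli p μ →
        ENNReal.ofReal (1 - Real.sqrt δ) ≤
          μ {ω | ConnVia G (openOf ω ∩ edgesWithin Lᶜ) (ball G {u} r) R}) :=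
  statement_5_general G hlf L R hLR r hr A hA p δ hp hmid
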